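/- Assume the orthogonality condition Q·Q̃ᵀ = 0. Then the 3N×3N block matrix P̃ = [[A, 0, B], [B, −A, 0], [Fᵀ, −Fᵀ, I_N]] is invertible, with inverse the block matrix [[A⁻¹, (A⁻¹)^{(k)}, −F], [(A⁻¹)^{(k)}, −A⁻¹ + (A⁻¹)^{(k)}, −F], [0, −(A⁻¹)^{(k)}, I_N]]; equivalently, the product of P̃ with this block matrix is the 3N×3N identity. (The explicit inverse computed in Appendix C.) -/

import Mathlib

open Matrix

/-- Appendix C: with `A` invertible, `Q` its first `k` rows, `Q̃` its last `N - k` rows,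
`Q · Q̃ᵀ = 0`, `B` equal to `A` on its first `k` rows and zero below, `F := A⁻¹ B`, and
`(A⁻¹)^{(k)}` obtained from `A⁻¹` by zeroing the last `N - k` columns, the block matrix
`P̃ = [[A, 0, B], [B, −A, 0], [Fᵀ, −Fᵀ, 1]]` is invertible with inverse
`[[A⁻¹, (A⁻¹)^{(k)}, −F], [(A⁻¹)^{(k)}, −A⁻¹ + (A⁻¹)^{(k)}, −F], [0, −(A⁻¹)^{(k)}, 1]]`:
the product of `P̃` with the latter is the identity. -/
theorem block_matrix_inverse (K : Type*) [Field K] (N k : ℕ) (hk : k ≤ N)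
    (A : Matrix (Fin N) (Fin N) K) (hA : IsUnit A)
    (horth : A.submatrix (Fin.castLE hk) id *
      (A.submatrix (fun a : Fin (N - k) => (⟨k + (a : ℕ), by omega⟩ : Fin N)) id)ᵀ = 0) :
    let B : Matrix (Fin N) (Fin N) K := Matrix.of fun i j => if (i : ℕ) < k then A i j else 0
    let F : Matrix (Fin N) (Fin N) K := A⁻¹ * B
    let Ak : Matrix (Fin N) (Fin N) K := Matrix.of fun i j => if (j : ℕ) < k then A⁻¹ i j else 0
    let Ptilde : Matrix ((Fin N ⊕ Fin N) ⊕ Fin N) ((Fin N ⊕ Fin N) ⊕ Fin N) K :=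
      Matrix.fromBlocks (Matrix.fromBlocks A 0 B (-A)) (Matrix.fromRows B 0)
        (Matrix.fromCols Fᵀ (-Fᵀ)) 1
    let PtildeInv : Matrix ((Fin N ⊕ Fin N) ⊕ Fin N) ((Fin N ⊕ Fin N) ⊕ Fin N) K :=
      Matrix.fromBlocks (Matrix.fromBlocks A⁻¹ Ak Ak (-A⁻¹ + Ak)) (Matrix.fromRows (-F) (-F))
        (Matrix.fromCols 0 (-Ak)) 1
    IsUnit Ptilde ∧ Ptilde * PtildeInv = 1 := by
  intro B F Ak Ptilde PtildeInv
  have hdet : IsUnit A.det := (Matrix.isUnit_iff_isUnit_det A).mp hA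
  have hA1 : A * A⁻¹ = 1 := Matrix.mul_nonsing_inv A hdet
  have hA2 : A⁻¹ * A = 1 := Matrix.nonsing_inv_mul A hdet
  set P : Matrix (Fin N) (Fin N) K :=
    Matrix.diagonal (fun i : Fin N => if (i : ℕ) < k then (1 : K) else 0) with hPdef
  have hPP : P * P = P := by
    ext i j
    rcases eq_or_ne i j with rfl | hij
    · rw [hPdef]
      simp only [Matrix.diagonal_mul, Matrix.diagonal_apply_eq]
      split_ifs <;> simp
    · rw [hPdef]
      simp [Matrix.diagonal_mul, Matrix.diagonal_apply_ne _ hij]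
  have hB : B = P * A := by
    ext i j
    simp only [B, Matrix.of_apply, hPdef, Matrix.diagonal_mul]
    split_ifs <;> simp
  have hAk : Ak = A⁻¹ * P := by
    ext i j
    simp only [Ak, Matrix.of_apply, hPdef, Matrix.mul_diagonal]
    split_ifs <;> simp
  have horth' : ∀ i j : Fin N, (i : ℕ) < k → k ≤ (j : ℕ) → ∑ m, A i m * A j m = 0 := by
    intro i j hi hj
    have h := congrFun (congrFun horth ⟨(i : ℕ), hi⟩) ⟨(j : ℕ) - k, by omega⟩
    have e1 : (Fin.castLE hk ⟨(i : ℕ), hi⟩) = i := by ext; rfl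
    have e2 : (⟨k + ((j : ℕ) - k), by omega⟩ : Fin N) = j := by ext; simp; omega
    simpa [Matrix.mul_apply, e1, e2] using h
  have hcomm : (A * Aᵀ) * P = P * (A * Aᵀ) := by
    ext i j
    simp only [hPdef, Matrix.mul_diagonal, Matrix.diagonal_mul]
    rcases lt_or_ge (i : ℕ) k with hi | hi <;> rcases lt_or_ge (j : ℕ) k with hj | hj
    · simp [hi, hj]
    · have hz : (A * Aᵀ) i j = 0 := by
        rw [Matrix.mul_apply]; simpa [Matrix.transpose_apply] using horth' i j hi hj
      simp [hi, not_lt.mpr hj, hz]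
    · have hz : (A * Aᵀ) i j = 0 := by
        rw [Matrix.mul_apply]
        simp only [Matrix.transpose_apply]
        calc ∑ m, A i m * A j m = ∑ m, A j m * A i m :=
              Finset.sum_congr rfl fun m _ => mul_comm _ _
          _ = 0 := horth' j i hj hi
      simp [not_lt.mpr hi, hj, hz]
    · simp [not_lt.mpr hi, not_lt.mpr hj]
  have hdetT : IsUnit Aᵀ.det := by rwa [Matrix.det_transpose]
  have hT1 : Aᵀ * (Aᵀ)⁻¹ = 1 := Matrix.mul_nonsing_inv Aᵀ hdetT
  have hdetM : IsUnit (A * Aᵀ).det := by rw [Matrix.det_mul]; exact hdet.mul hdetT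
  have hM1 : (A * Aᵀ) * (A * Aᵀ)⁻¹ = 1 := Matrix.mul_nonsing_inv _ hdetM
  have hM2 : (A * Aᵀ)⁻¹ * (A * Aᵀ) = 1 := Matrix.nonsing_inv_mul _ hdetM
  have hcommInv : P * (A * Aᵀ)⁻¹ = (A * Aᵀ)⁻¹ * P := by
    have h1 : (A * Aᵀ)⁻¹ * ((A * Aᵀ) * P) * (A * Aᵀ)⁻¹ = P * (A * Aᵀ)⁻¹ := by
      rw [← Matrix.mul_assoc, hM2, Matrix.one_mul]
    have h2 : (A * Aᵀ)⁻¹ * (P * (A * Aᵀ)) * (A * Aᵀ)⁻¹ = (A * Aᵀ)⁻¹ * P := by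
      rw [Matrix.mul_assoc ((A * Aᵀ)⁻¹) (P * (A * Aᵀ)), Matrix.mul_assoc P, hM1,
        Matrix.mul_one]
    rw [← h1, hcomm, h2]
  have hAF : A * F = B := by
    show A * (A⁻¹ * B) = B
    rw [← Matrix.mul_assoc, hA1, Matrix.one_mul]
  have hBAinv : B * A⁻¹ = P := by rw [hB, Matrix.mul_assoc, hA1, Matrix.mul_one]
  have hAAk : A * Ak = P := by rw [hAk, ← Matrix.mul_assoc, hA1, Matrix.one_mul]
  have hBAk : B * Ak = P := by
    rw [hB, hAk, Matrix.mul_assoc, ← Matrix.mul_assoc A, hA1, Matrix.one_mul, hPP]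
  have hBF : B * F = B := by
    show B * (A⁻¹ * B) = B
    rw [← Matrix.mul_assoc, hBAinv, hB, ← Matrix.mul_assoc, hPP]
  have hFt : Fᵀ = Aᵀ * P * (Aᵀ)⁻¹ := by
    show (A⁻¹ * B)ᵀ = _
    rw [hB, ← Matrix.mul_assoc, Matrix.transpose_mul, Matrix.transpose_mul,
      Matrix.transpose_nonsing_inv, hPdef, Matrix.diagonal_transpose, Matrix.mul_assoc]
  have hFtAinv : Fᵀ * A⁻¹ = Ak := by
    rw [hFt, hAk, Matrix.mul_assoc (Aᵀ * P), ← Matrix.mul_inv_rev, Matrix.mul_assoc,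
      hcommInv, ← Matrix.mul_assoc, Matrix.mul_inv_rev, ← Matrix.mul_assoc Aᵀ, hT1,
      Matrix.one_mul]
  have hFtAk : Fᵀ * Ak = Ak := by
    rw [hAk, ← Matrix.mul_assoc, hFtAinv, hAk, Matrix.mul_assoc, hPP]
  -- the four blocks of the product
  have hTL : Matrix.fromBlocks A 0 B (-A) * Matrix.fromBlocks A⁻¹ Ak Ak (-A⁻¹ + Ak) +
      Matrix.fromRows B 0 * Matrix.fromCols 0 (-Ak) = 1 := by
    rw [Matrix.fromBlocks_multiply, Matrix.fromRows_mul_fromCols, Matrix.fromBlocks_add,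
      ← Matrix.fromBlocks_one, Matrix.fromBlocks_inj]
    refine ⟨?_, ?_, ?_, ?_⟩
    · simp [hA1]
    · rw [Matrix.zero_mul, add_zero, Matrix.mul_neg, hAAk, hBAk]; abel
    · simp [hBAinv, hAAk]
    · rw [Matrix.zero_mul, add_zero, hBAk, Matrix.neg_mul, Matrix.mul_add, Matrix.mul_neg,
        hA1, hAAk]
      abel
  have hTR : Matrix.fromBlocks A 0 B (-A) * Matrix.fromRows (-F) (-F) +
      Matrix.fromRows B 0 * (1 : Matrix (Fin N) (Fin N) K) = 0 := by
    rw [Matrix.fromBlocks_mul_fromRows, Matrix.mul_one]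
    have h1 : A * (-F) + 0 * (-F) + B = 0 := by
      rw [Matrix.mul_neg, hAF, Matrix.zero_mul]; abel
    have h2 : B * (-F) + (-A) * (-F) + 0 = 0 := by
      rw [Matrix.mul_neg, hBF, Matrix.neg_mul, Matrix.mul_neg, neg_neg, hAF]; abel
    ext (i | i) j
    · simpa using congrFun (congrFun h1 i) j
    · simpa using congrFun (congrFun h2 i) j
  have hBL : Matrix.fromCols Fᵀ (-Fᵀ) * Matrix.fromBlocks A⁻¹ Ak Ak (-A⁻¹ + Ak) +
      (1 : Matrix (Fin N) (Fin N) K) * Matrix.fromCols 0 (-Ak) = 0 := by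
    rw [Matrix.fromCols_mul_fromBlocks, Matrix.one_mul]
    have h1 : Fᵀ * A⁻¹ + (-Fᵀ) * Ak + 0 = 0 := by
      rw [hFtAinv, Matrix.neg_mul, hFtAk]; abel
    have h2 : Fᵀ * Ak + (-Fᵀ) * (-A⁻¹ + Ak) + (-Ak) = 0 := by
      rw [hFtAk, Matrix.neg_mul, Matrix.mul_add, Matrix.mul_neg, hFtAinv, hFtAk]; abel
    ext i (j | j)
    · simpa using congrFun (congrFun h1 i) j
    · simpa using congrFun (congrFun h2 i) j
  have hBR : Matrix.fromCols Fᵀ (-Fᵀ) * Matrix.fromRows (-F) (-F) +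
      (1 : Matrix (Fin N) (Fin N) K) * 1 = 1 := by
    rw [Matrix.fromCols_mul_fromRows, Matrix.mul_one, Matrix.mul_neg, Matrix.neg_mul,
      Matrix.mul_neg, neg_neg]
    abel
  have hprod : Ptilde * PtildeInv = 1 := by
    show Matrix.fromBlocks (Matrix.fromBlocks A 0 B (-A)) (Matrix.fromRows B 0)
        (Matrix.fromCols Fᵀ (-Fᵀ)) 1 *
      Matrix.fromBlocks (Matrix.fromBlocks A⁻¹ Ak Ak (-A⁻¹ + Ak)) (Matrix.fromRows (-F) (-F))
        (Matrix.fromCols 0 (-Ak)) 1 = 1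
    rw [Matrix.fromBlocks_multiply, hTL, hTR, hBL, hBR, Matrix.fromBlocks_one]
  refine ⟨?_, hprod⟩
  have hd := congrArg Matrix.det hprod
  rw [Matrix.det_mul, Matrix.det_one] at hd
  exact (Matrix.isUnit_iff_isUnit_det Ptilde).mpr (IsUnit.of_mul_eq_one _ hd)
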